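/- Let n ≥ 1 and for each i ∈ Fin n let Xᵢ be a measurable space carrying two probability measures πᵢ and μᵢ. For a subset c ⊆ Fin n let π^c denote the product measure Measure.pi of the family equal to πᵢ for i ∈ c and μᵢ for i ∉ c. Let p₁, …, pₙ be nonnegative reals with ∑ₖ pₖ = 1, and define the PAR mixture measure M = ∑ₖ pₖ · (1/(n choose k)) · ∑_{c ∈ powersetCard k (univ)} π^c. Then TV(M, Measure.pi μ) ≤ (∑ₖ pₖ · k) · ((1/n) · ∑ᵢ TV(πᵢ, μᵢ)); that is, the total variation shift of the PAR mixture joint distribution from the behavior joint distribution is at most the expected number of deviating agents E[k] = ∑ₖ pₖ·k times the average single-agent policy deviation. -/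

import Mathlib

/-!
Replacing the policy of a single agent `j` moves the joint product measure by at most
`TV(πⱼ, μⱼ)`: split off coordinate `j` and integrate the slices of a set against the other
coordinates. Swapping in the agents of `c` one at a time, the triangle inequality gives
`TV(π^c, μ^⊗) ≤ ∑_{i ∈ c} TV(πᵢ, μᵢ)`. Total variation is convex in its first argument, so
the mixture is bounded by the average of these bounds, and each agent lies in `C(n-1, k-1)`
of the `C(n, k)` subsets of size `k`, a fraction `k / n`.
-/

open MeasureTheory Finset

/-- The total variation distance between two measures: the supremum over
measurable sets of the absolute difference of the (real-valued) measures. -/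
noncomputable def tvDist {X : Type*} [MeasurableSpace X]
    (p q : Measure X) : ℝ :=
  ⨆ A : {A : Set X // MeasurableSet A}, |(p A.1).toReal - (q A.1).toReal|

instance ite_measure_sigmaFinite {X : Type*} [MeasurableSpace X]
    (p : Prop) [Decidable p] (μ ν : Measure X)
    [SigmaFinite μ] [SigmaFinite ν] : SigmaFinite (if p then μ else ν) := by
  split <;> infer_instance

section TotalVariation

variable {X Y : Type*} [MeasurableSpace X] [MeasurableSpace Y]

lemma tvDist_le {p q : Measure X} {t : ℝ}
    (h : ∀ A, MeasurableSet A → |(p A).toReal - (q A).toReal| ≤ t) : tvDist p q ≤ t :=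
  have : Nonempty {A : Set X // MeasurableSet A} := ⟨⟨∅, .empty⟩⟩
  ciSup_le fun A => h A.1 A.2

lemma abs_sub_le_tvDist (p q : Measure X) [IsFiniteMeasure p] [IsFiniteMeasure q]
    {A : Set X} (hA : MeasurableSet A) : |(p A).toReal - (q A).toReal| ≤ tvDist p q := by
  refine le_ciSup (f := fun A : {A : Set X // MeasurableSet A} =>
    |(p A.1).toReal - (q A.1).toReal|) ⟨p.real Set.univ + q.real Set.univ, ?_⟩ ⟨A, hA⟩
  rintro _ ⟨B, rfl⟩
  exact abs_sub_le_of_nonneg_of_le measureReal_nonneg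
    ((measureReal_mono B.1.subset_univ).trans (le_add_of_nonneg_right measureReal_nonneg))
    measureReal_nonneg
    ((measureReal_mono B.1.subset_univ).trans (le_add_of_nonneg_left measureReal_nonneg))

@[simp]
lemma tvDist_self (p : Measure X) : tvDist p p = 0 := by
  simp [tvDist]

lemma tvDist_triangle (p q r : Measure X) [IsFiniteMeasure p] [IsFiniteMeasure q]
    [IsFiniteMeasure r] : tvDist p r ≤ tvDist p q + tvDist q r :=
  tvDist_le fun _ hA => (abs_sub_le _ _ _).trans
    (add_le_add (abs_sub_le_tvDist p q hA) (abs_sub_le_tvDist q r hA))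

lemma tvDist_map_le (p q : Measure X) [IsFiniteMeasure p] [IsFiniteMeasure q] {f : X → Y}
    (hf : Measurable f) : tvDist (p.map f) (q.map f) ≤ tvDist p q :=
  tvDist_le fun A hA => by
    rw [Measure.map_apply hf hA, Measure.map_apply hf hA]
    exact abs_sub_le_tvDist p q (hf hA)

lemma tvDist_prod_le (p₁ p₂ : Measure X) (r : Measure Y) [IsFiniteMeasure p₁]
    [IsFiniteMeasure p₂] [IsProbabilityMeasure r] :
    tvDist (p₁.prod r) (p₂.prod r) ≤ tvDist p₁ p₂ := by
  refine tvDist_le fun B hB => ?_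
  have slice_integral (p : Measure X) [IsFiniteMeasure p] :
      ((p.prod r) B).toReal = ∫ y, (p ((fun x => (x, y)) ⁻¹' B)).toReal ∂r :=
    Measure.prod_apply_symm (μ := p) (ν := r) hB ▸ (integral_toReal
      (measurable_measure_prodMk_right (μ := p) hB).aemeasurable
      (ae_of_all _ fun _ => measure_lt_top _ _)).symm
  have slice_integrable (p : Measure X) [IsFiniteMeasure p] :
      Integrable (fun y => (p ((fun x => (x, y)) ⁻¹' B)).toReal) r :=
    integrable_toReal_of_lintegral_ne_top (measurable_measure_prodMk_right hB).aemeasurable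
      (Measure.prod_apply_symm (μ := p) (ν := r) hB ▸ measure_ne_top _ _)
  rw [slice_integral, slice_integral, ← integral_sub (slice_integrable p₁) (slice_integrable p₂),
    ← Real.norm_eq_abs]
  simpa using norm_integral_le_of_norm_le_const (μ := r)
    (ae_of_all _ fun y => (Real.norm_eq_abs _).trans_le
      (abs_sub_le_tvDist p₁ p₂ (measurable_prodMk_right (y := y) hB)))

lemma tvDist_sum_smul_le {κ : Type*} (s : Finset κ) (w : κ → ℝ) (hw0 : ∀ k ∈ s, 0 ≤ w k)
    (hw1 : ∑ k ∈ s, w k = 1) (ν : κ → Measure X) [∀ k, IsFiniteMeasure (ν k)]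
    (q : Measure X) [IsFiniteMeasure q] :
    tvDist (∑ k ∈ s, ENNReal.ofReal (w k) • ν k) q ≤ ∑ k ∈ s, w k * tvDist (ν k) q := by
  refine tvDist_le fun A hA => ?_
  have mixture_apply : ((∑ k ∈ s, ENNReal.ofReal (w k) • ν k) A).toReal =
      ∑ k ∈ s, w k * (ν k A).toReal := by
    simp only [Measure.finsetSum_apply, Measure.smul_apply, smul_eq_mul]
    rw [ENNReal.toReal_sum fun k _ => ENNReal.mul_ne_top ENNReal.ofReal_ne_top (measure_ne_top _ _)]
    exact sum_congr rfl fun k hk => by rw [ENNReal.toReal_mul, ENNReal.toReal_ofReal (hw0 k hk)]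
  calc |((∑ k ∈ s, ENNReal.ofReal (w k) • ν k) A).toReal - (q A).toReal|
      = |∑ k ∈ s, w k * ((ν k A).toReal - (q A).toReal)| := by
        simp only [mixture_apply, mul_sub, sum_sub_distrib, ← sum_mul, hw1, one_mul]
    _ ≤ ∑ k ∈ s, w k * tvDist (ν k) q := (abs_sum_le_sum_abs _ _).trans <| sum_le_sum fun k hk => by
        rw [abs_mul, abs_of_nonneg (hw0 k hk)]
        exact mul_le_mul_of_nonneg_left (abs_sub_le_tvDist _ _ hA) (hw0 k hk)

end TotalVariation

section Pi

variable {ι : Type*} [Fintype ι] {X : ι → Type*} [∀ i, MeasurableSpace (X i)]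

lemma tvDist_pi_le_of_unique [Unique ι] (f g : ∀ i, Measure (X i))
    [IsFiniteMeasure (f default)] [IsFiniteMeasure (g default)] :
    tvDist (Measure.pi f) (Measure.pi g) ≤ tvDist (f default) (g default) := by
  rw [← (measurePreserving_piUnique f).symm.map_eq, ← (measurePreserving_piUnique g).symm.map_eq]
  exact tvDist_map_le _ _ (MeasurableEquiv.piUnique X).symm.measurable

lemma tvDist_pi_le_of_forall_ne_eq [DecidableEq ι] (f g : ∀ i, Measure (X i))
    [∀ i, IsProbabilityMeasure (f i)] [∀ i, IsProbabilityMeasure (g i)] {j : ι}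
    (hfg : ∀ i ≠ j, f i = g i) :
    tvDist (Measure.pi f) (Measure.pi g) ≤ tvDist (f j) (g j) := by
  have hrest : (fun i : {i // ¬i = j} => f i) = fun i : {i // ¬i = j} => g i :=
    funext fun i => hfg i.1 i.2
  rw [← (measurePreserving_piEquivPiSubtypeProd f (· = j)).symm.map_eq,
    ← (measurePreserving_piEquivPiSubtypeProd g (· = j)).symm.map_eq, hrest]
  refine (tvDist_map_le _ _ (MeasurableEquiv.piEquivPiSubtypeProd X (· = j)).symm.measurable).trans
    ((tvDist_prod_le _ _ _).trans ?_)
  -- `piEquivPiSubtypeProd` equips `{i // i = j}` with `Subtype.fintype`, not `Fintype.subtypeEq`.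
  exact @tvDist_pi_le_of_unique {i // i = j} (Subtype.fintype _) (fun i => X i) _ _
    (fun i => f i) (fun i => g i) _ _

instance isProbabilityMeasure_piecewise (π μ : ∀ i, Measure (X i))
    [∀ i, IsProbabilityMeasure (π i)] [∀ i, IsProbabilityMeasure (μ i)] (c : Finset ι)
    [∀ i, Decidable (i ∈ c)] (i : ι) : IsProbabilityMeasure (c.piecewise π μ i) :=
  c.piecewise_cases π μ (fun ν => IsProbabilityMeasure ν) inferInstance inferInstance

lemma tvDist_pi_piecewise_le [DecidableEq ι] (π μ : ∀ i, Measure (X i))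
    [∀ i, IsProbabilityMeasure (π i)] [∀ i, IsProbabilityMeasure (μ i)] (c : Finset ι) :
    tvDist (Measure.pi (c.piecewise π μ)) (Measure.pi μ) ≤ ∑ i ∈ c, tvDist (π i) (μ i) := by
  induction c using Finset.induction with
  | empty => simp
  | @insert j c hj ih =>
    have hstep : tvDist (Measure.pi ((insert j c).piecewise π μ)) (Measure.pi (c.piecewise π μ))
        ≤ tvDist (π j) (μ j) := by
      simpa [piecewise_insert_self, piecewise_eq_of_notMem _ _ _ hj] using
        tvDist_pi_le_of_forall_ne_eq (j := j) _ _ fun i hi => c.piecewise_insert_of_ne π μ hi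
    rw [sum_insert hj]
    exact (tvDist_triangle _ _ _).trans (add_le_add hstep ih)

end Pi

lemma sum_powersetCard_sum {ι M : Type*} [Fintype ι] [DecidableEq ι] [AddCommMonoid M]
    {k : ℕ} (hk : 1 ≤ k) (t : ι → M) :
    ∑ c ∈ powersetCard k univ, ∑ i ∈ c, t i =
      (Fintype.card ι - 1).choose (k - 1) • ∑ i, t i := by
  rw [sum_comm' (t' := univ) (s' := fun i => (powersetCard k univ).filter ({i} ⊆ ·))
    (fun c i => by simp [and_comm]), smul_sum]
  refine sum_congr rfl fun i _ => ?_
  rw [sum_const, card_filter_powersetCard_subset _ _ _ (subset_univ _) (by simpa using hk),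
    card_singleton, card_univ]

lemma choose_pred_pred_div_choose {n k : ℕ} (hk : 1 ≤ k) (hkn : k ≤ n) :
    ((n - 1).choose (k - 1) : ℝ) / n.choose k = k / n := by
  have hpascal := Nat.add_one_mul_choose_eq (n - 1) (k - 1)
  rw [Nat.sub_add_cancel (hk.trans hkn), Nat.sub_add_cancel hk] at hpascal
  rw [div_eq_div_iff (by exact_mod_cast (Nat.choose_pos hkn).ne') (by norm_cast; omega)]
  norm_cast
  rw [mul_comm, hpascal, mul_comm]

theorem tvDist_PAR_mixture_le_general {n : ℕ} {X : Fin n → Type*}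
    [∀ i, MeasurableSpace (X i)]
    (π μ : ∀ i, Measure (X i))
    [∀ i, IsProbabilityMeasure (π i)] [∀ i, IsProbabilityMeasure (μ i)]
    (p : ℕ → ℝ) (hp0 : ∀ k ∈ Icc 1 n, 0 ≤ p k)
    (hp1 : ∑ k ∈ Icc 1 n, p k = 1) :
    tvDist
      (∑ k ∈ Icc 1 n,
        ENNReal.ofReal (p k * (1 / (n.choose k : ℝ))) •
          ∑ c ∈ powersetCard k (univ : Finset (Fin n)),
            Measure.pi (fun i => if i ∈ c then π i else μ i))
      (Measure.pi μ) ≤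
    (∑ k ∈ Icc 1 n, p k * (k : ℝ)) *
      ((1 / (n : ℝ)) * ∑ i, tvDist (π i) (μ i)) := by
  set w : ℕ → ℝ := fun k => p k * (1 / (n.choose k : ℝ))
  set S := (Icc 1 n).sigma fun k => powersetCard k (univ : Finset (Fin n))
  have hw0 : ∀ x ∈ S, 0 ≤ w x.1 := fun x hx =>
    mul_nonneg (hp0 x.1 (mem_sigma.1 hx).1) (by positivity)
  have hw1 : ∑ x ∈ S, w x.1 = 1 := by
    rw [sum_sigma, ← hp1]
    refine sum_congr rfl fun k hk => ?_
    have hchoose : (n.choose k : ℝ) ≠ 0 := by exact_mod_cast (Nat.choose_pos (mem_Icc.1 hk).2).ne'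
    simp only [w, sum_const, card_powersetCard, card_univ, Fintype.card_fin, nsmul_eq_mul]
    field_simp
  have hmixture : (∑ k ∈ Icc 1 n, ENNReal.ofReal (w k) •
      ∑ c ∈ powersetCard k (univ : Finset (Fin n)),
        Measure.pi (fun i => if i ∈ c then π i else μ i)) =
      ∑ x ∈ S, ENNReal.ofReal (w x.1) • Measure.pi (x.2.piecewise π μ) := by
    simp only [S, sum_sigma, smul_sum]
    rfl
  rw [hmixture]
  calc _ ≤ ∑ x ∈ S, w x.1 * tvDist (Measure.pi (x.2.piecewise π μ)) (Measure.pi μ) :=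
        tvDist_sum_smul_le S (fun x => w x.1) hw0 hw1 _ _
    _ ≤ ∑ x ∈ S, w x.1 * ∑ i ∈ x.2, tvDist (π i) (μ i) :=
        sum_le_sum fun x hx => mul_le_mul_of_nonneg_left (tvDist_pi_piecewise_le π μ x.2) (hw0 x hx)
    _ = ∑ k ∈ Icc 1 n, p k * k * (1 / n * ∑ i, tvDist (π i) (μ i)) := by
        rw [sum_sigma]
        refine sum_congr rfl fun k hk => ?_
        obtain ⟨hk1, hkn⟩ := mem_Icc.1 hk
        simp only [w, ← mul_sum, sum_powersetCard_sum hk1, Fintype.card_fin, nsmul_eq_mul]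
        linear_combination p k * (∑ i, tvDist (π i) (μ i)) * choose_pred_pred_div_choose hk1 hkn
    _ = _ := (sum_mul _ _ _).symm

/-- The PLCQL distribution-shift bound: the total variation distance of the
PAR mixture joint distribution (sample a subset size `k` with probability
`p k`, then a uniform `k`-element subset whose agents use the learned policies
`π i`, while the rest keep the behavior policies `μ i`) from the behavior joint
distribution is at most the expected number of deviating agents `∑ₖ pₖ·k`
times the average single-agent policy deviation `(1/n) ∑ᵢ TV(πᵢ, μᵢ)`. -/
theorem tvDist_PAR_mixture_le {n : ℕ} (hn : 1 ≤ n) {X : Fin n → Type*}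
    [∀ i, MeasurableSpace (X i)]
    (π μ : ∀ i, Measure (X i))
    [∀ i, IsProbabilityMeasure (π i)] [∀ i, IsProbabilityMeasure (μ i)]
    (p : ℕ → ℝ) (hp0 : ∀ k ∈ Icc 1 n, 0 ≤ p k)
    (hp1 : ∑ k ∈ Icc 1 n, p k = 1) :
    tvDist
      (∑ k ∈ Icc 1 n,
        ENNReal.ofReal (p k * (1 / (n.choose k : ℝ))) •
          ∑ c ∈ powersetCard k (univ : Finset (Fin n)),
            Measure.pi (fun i => if i ∈ c then π i else μ i))
      (Measure.pi μ) ≤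
    (∑ k ∈ Icc 1 n, p k * (k : ℝ)) *
      ((1 / (n : ℝ)) * ∑ i, tvDist (π i) (μ i)) :=
  tvDist_PAR_mixture_le_general π μ p hp0 hp1
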